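/- Let A be a finite-dimensional solvable Leibniz algebra over an infinite field, K a primitive ideal of A, and B/K the unique minimal ideal of A/K. Then K is a generalized Frattini ideal of A if and only if B = Nil(A). -/

import Mathlib

namespace Leib

variable (F : Type*) [Field F] {A : Type*} [NonUnitalNonAssocRing A]
  [Module F A] [SMulCommClass F A A] [IsScalarTower F A A]

/-- `S` is a subalgebra: a submodule closed under multiplication. -/
def IsSubalg (S : Submodule F A) : Prop := ∀ x ∈ S, ∀ y ∈ S, x * y ∈ S

/-- `S` is a (two-sided) ideal of the Leibniz algebra `A`. -/
def IsIdeal (S : Submodule F A) : Prop := ∀ a : A, ∀ s ∈ S, a * s ∈ S ∧ s * a ∈ S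

/-- The normalizer `N_A(C)` of a subspace `C` in `A`. -/
def normalizer (C : Submodule F A) : Submodule F A where
  carrier := {a | ∀ c ∈ C, a * c ∈ C ∧ c * a ∈ C}
  zero_mem' := by intro c hc; simp [C.zero_mem]
  add_mem' := by
    intro a b ha hb c hc
    exact ⟨by rw [add_mul]; exact C.add_mem (ha c hc).1 (hb c hc).1,
           by rw [mul_add]; exact C.add_mem (ha c hc).2 (hb c hc).2⟩
  smul_mem' := by
    intro r a ha c hc
    exact ⟨by rw [smul_mul_assoc]; exact C.smul_mem r (ha c hc).1,
           by rw [mul_smul_comm]; exact C.smul_mem r (ha c hc).2⟩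

/-- The span of all products `s * t` with `s ∈ S`, `t ∈ T`. -/
def mulSpan (S T : Submodule F A) : Submodule F A :=
  Submodule.span F {x | ∃ s ∈ S, ∃ t ∈ T, x = s * t}

/-- The (left-normed) lower central series of a subspace `S`:
`S, S·S, S·(S·S), …`. -/
def lcs (S : Submodule F A) : ℕ → Submodule F A
  | 0 => S
  | n + 1 => mulSpan F S (lcs S n)

/-- `S` is nilpotent. -/
def IsNilp (S : Submodule F A) : Prop := ∃ n, lcs F S n = ⊥

/-- The derived series of a subspace `S`. -/
def derSeries (S : Submodule F A) : ℕ → Submodule F A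
  | 0 => S
  | n + 1 => mulSpan F (derSeries S n) (derSeries S n)

/-- `S` is solvable. -/
def IsSolv (S : Submodule F A) : Prop := ∃ n, derSeries F S n = ⊥

/-- `C` is a Cartan subalgebra of the subalgebra `K`: a nilpotent subalgebra of `K`
that is self-normalizing in `K`. -/
def IsCartanOf (K C : Submodule F A) : Prop :=
  C ≤ K ∧ IsSubalg F C ∧ IsNilp F C ∧ normalizer F C ⊓ K = C

/-- `H` is a generalized Frattini ideal (Cartan-subalgebra definition): `H` is proper and
whenever `A = H + N_A(C)` for `C` a Cartan subalgebra of an ideal `K` of `A`,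
it follows that `A = N_A(C)`. -/
def GenFrattiniC (H : Submodule F A) : Prop :=
  H ≠ ⊤ ∧ ∀ K C : Submodule F A, IsIdeal F K → IsCartanOf F K C →
    H ⊔ normalizer F C = ⊤ → normalizer F C = ⊤

/-- `H` is a generalized Frattini ideal (nilpotency characterization): `H` is proper and
every ideal `J ⊇ H` with `J/H` nilpotent is nilpotent. -/
def GenFrattiniN (H : Submodule F A) : Prop :=
  H ≠ ⊤ ∧ ∀ J : Submodule F A, IsIdeal F J → H ≤ J →
    (∃ n, lcs F J n ≤ H) → IsNilp F J

/-- The center `Z(A)`. -/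
def center : Submodule F A where
  carrier := {z | ∀ a : A, z * a = 0 ∧ a * z = 0}
  zero_mem' := by intro a; simp
  add_mem' := by
    intro x y hx hy a
    exact ⟨by rw [add_mul, (hx a).1, (hy a).1, add_zero],
           by rw [mul_add, (hx a).2, (hy a).2, add_zero]⟩
  smul_mem' := by
    intro r x hx a
    exact ⟨by rw [smul_mul_assoc, (hx a).1, smul_zero],
           by rw [mul_smul_comm, (hx a).2, smul_zero]⟩

/-- `M` is a maximal subalgebra of `A`. -/
def IsMaxSubalg (M : Submodule F A) : Prop :=
  IsSubalg F M ∧ M ≠ ⊤ ∧ ∀ S : Submodule F A, IsSubalg F S → M < S → S = ⊤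

/-- `I` is a maximal ideal of `A`. -/
def IsMaxIdeal (I : Submodule F A) : Prop :=
  IsIdeal F I ∧ I ≠ ⊤ ∧ ∀ J : Submodule F A, IsIdeal F J → I < J → J = ⊤

/-- `K` is a primitive ideal: `Φ(A/K) = 0`, `A/K` has a unique minimal ideal, and
`dim (A/K) > 1`.  (Ideals and maximal subalgebras of `A/K` are stated via the
correspondence with ideals and maximal subalgebras of `A` containing `K`.) -/
def IsPrimitiveIdeal (K : Submodule F A) : Prop :=
  IsIdeal F K ∧
  (∀ J : Submodule F A, IsIdeal F J → K ≤ J →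
      (∀ M : Submodule F A, IsMaxSubalg F M → K ≤ M → J ≤ M) → J = K) ∧
  (∃! B : Submodule F A, IsIdeal F B ∧ K < B ∧
      ∀ B' : Submodule F A, IsIdeal F B' → K < B' → ¬ B' < B) ∧
  1 < Module.finrank F (A ⧸ K)

end Leib

/-!
Since `A` is solvable, the minimal ideal `B/K` of `A/K` is abelian, so `B` is nilpotent modulo `K`.
Since `Φ(A/K) = 0`, some maximal subalgebra `M ⊇ K` misses `B`; then `A = M + B`, and the
centralizer of `B/K` meets `M` in an ideal, which must be `K`, so `B/K` is its own centralizer.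
Finally, any ideal `J ⊇ B` that is nilpotent modulo `K` centralizes `B/K`: otherwise
`JB + BJ + K = B` and `B` would lie in every term of the lower central series of `J` modulo `K`.
So the ideals `J ⊇ K` that are nilpotent modulo `K` are exactly those inside `B`, and `K` is
generalized Frattini iff `B` is nilpotent. A nilpotent `B` lies in `Nil(A)`, which, being an ideal
containing `B` and nilpotent modulo `K`, lies in `B` in turn.
-/

namespace Leib

variable {F : Type*} [Field F] {A : Type*} [NonUnitalNonAssocRing A] [Module F A]

theorem mul_mem_mulSpan {S T : Submodule F A} {s t : A} (hs : s ∈ S) (ht : t ∈ T) :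
    s * t ∈ mulSpan F S T :=
  Submodule.subset_span ⟨s, hs, t, ht, rfl⟩

theorem mulSpan_le {S T U : Submodule F A} (h : ∀ s ∈ S, ∀ t ∈ T, s * t ∈ U) :
    mulSpan F S T ≤ U :=
  Submodule.span_le.2 (by rintro x ⟨s, hs, t, ht, rfl⟩; exact h s hs t ht)

theorem mulSpan_mono {S S' T T' : Submodule F A} (hS : S ≤ S') (hT : T ≤ T') :
    mulSpan F S T ≤ mulSpan F S' T' :=
  mulSpan_le fun _ hs _ ht => mul_mem_mulSpan (hS hs) (hT ht)

theorem mulSpan_le_of_isIdeal_right {S T : Submodule F A} (hT : IsIdeal F T) :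
    mulSpan F S T ≤ T :=
  mulSpan_le fun s _ _ ht => (hT s _ ht).1

theorem mulSpan_le_of_isIdeal_left {S T : Submodule F A} (hS : IsIdeal F S) :
    mulSpan F S T ≤ S :=
  mulSpan_le fun _ hs t _ => (hS t _ hs).2

theorem mulSpan_sup_le {S T K : Submodule F A} (hK : IsIdeal F K) :
    mulSpan F (S ⊔ K) (T ⊔ K) ≤ mulSpan F S T ⊔ K := by
  refine mulSpan_le fun x hx y hy => ?_
  obtain ⟨s, hs, k, hk, rfl⟩ := Submodule.mem_sup.1 hx
  obtain ⟨t, ht, k', hk', rfl⟩ := Submodule.mem_sup.1 hy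
  have e : (s + k) * (t + k') = s * t + (s * k' + k * t + k * k') := by
    rw [add_mul, mul_add, mul_add]; abel
  rw [e]
  exact Submodule.add_mem_sup (mul_mem_mulSpan hs ht)
    (add_mem (add_mem (hK s k' hk').1 (hK t k hk).2) (hK k k' hk').1)

theorem isIdeal_sup {I J : Submodule F A} (hI : IsIdeal F I) (hJ : IsIdeal F J) :
    IsIdeal F (I ⊔ J) := by
  intro a x hx
  obtain ⟨i, hi, j, hj, rfl⟩ := Submodule.mem_sup.1 hx
  rw [mul_add, add_mul]
  exact ⟨Submodule.add_mem_sup (hI a i hi).1 (hJ a j hj).1,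
    Submodule.add_mem_sup (hI a i hi).2 (hJ a j hj).2⟩

theorem lcs_mono {S S' : Submodule F A} (h : S ≤ S') : ∀ k, lcs F S k ≤ lcs F S' k
  | 0 => h
  | k + 1 => mulSpan_mono h (lcs_mono h k)

theorem derSeries_mono {S S' : Submodule F A} (h : S ≤ S') :
    ∀ k, derSeries F S k ≤ derSeries F S' k
  | 0 => h
  | k + 1 => mulSpan_mono (derSeries_mono h k) (derSeries_mono h k)

theorem IsNilp.of_le {S T : Submodule F A} (hT : IsNilp F T) (h : S ≤ T) : IsNilp F S :=
  let ⟨n, hn⟩ := hT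
  ⟨n, le_bot_iff.1 (hn ▸ lcs_mono h n)⟩

theorem IsSolv.of_le {S T : Submodule F A} (hT : IsSolv F T) (h : S ≤ T) : IsSolv F S :=
  let ⟨n, hn⟩ := hT
  ⟨n, le_bot_iff.1 (hn ▸ derSeries_mono h n)⟩

theorem sup_eq_of_minimal {K B V : Submodule F A} (hK : IsIdeal F K)
    (hBmin : ∀ B' : Submodule F A, IsIdeal F B' → K < B' → ¬ B' < B)
    (hKB : K ≤ B) (hV : IsIdeal F V) (hVB : V ≤ B) (hVK : ¬ V ≤ K) : V ⊔ K = B := by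
  by_contra hne
  exact hBmin _ (isIdeal_sup hV hK)
    (lt_of_le_not_ge le_sup_right fun h => hVK (le_sup_left.trans h))
    (lt_of_le_of_ne (sup_le hVB hKB) hne)

theorem le_of_unique_minimal [Module.Finite F A] {K B : Submodule F A}
    (hBuniq : ∀ B'' : Submodule F A, IsIdeal F B'' → K < B'' →
      (∀ B' : Submodule F A, IsIdeal F B' → K < B' → ¬ B' < B'') → B'' = B)
    {J : Submodule F A} (hJ : IsIdeal F J) (hKJ : K < J) : B ≤ J := by
  obtain ⟨B', ⟨hB', hKB', hB'J⟩, hmin⟩ :=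
    IsArtinian.set_has_minimal {P : Submodule F A | IsIdeal F P ∧ K < P ∧ P ≤ J}
      ⟨J, hJ, hKJ, le_rfl⟩
  have hB'B : B' = B :=
    hBuniq B' hB' hKB' fun P hP hKP hPB' => hmin P ⟨hP, hKP, hPB'.le.trans hB'J⟩ hPB'
  exact hB'B ▸ hB'J

theorem isSubalg_sup {M B : Submodule F A} (hM : IsSubalg F M) (hB : IsIdeal F B) :
    IsSubalg F (M ⊔ B) := by
  intro x hx y hy
  obtain ⟨m, hm, b, hb, rfl⟩ := Submodule.mem_sup.1 hx
  obtain ⟨m', hm', b', hb', rfl⟩ := Submodule.mem_sup.1 hy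
  have e : (m + b) * (m' + b') = m * m' + (m * b' + b * m' + b * b') := by
    rw [add_mul, mul_add, mul_add]; abel
  rw [e]
  exact Submodule.add_mem_sup (hM m hm m' hm')
    (add_mem (add_mem (hB m b' hb').1 (hB m' b hb).2) (hB b b' hb').1)

theorem IsMaxSubalg.sup_eq_top {M B : Submodule F A} (hM : IsMaxSubalg F M) (hB : IsIdeal F B)
    (hBM : ¬ B ≤ M) : M ⊔ B = ⊤ :=
  hM.2.2 _ (isSubalg_sup hM.1 hB) (lt_of_le_not_ge le_sup_left fun h => hBM (le_sup_right.trans h))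

theorem mul_right_mem_of_mem_mulSpan [IsScalarTower F A A] {S T U : Submodule F A} {x a : A}
    (hx : x ∈ mulSpan F S T) (h : ∀ s ∈ S, ∀ t ∈ T, s * t * a ∈ U) : x * a ∈ U := by
  induction hx using Submodule.span_induction with
  | mem y hy => obtain ⟨s, hs, t, ht, rfl⟩ := hy; exact h s hs t ht
  | zero => rw [zero_mul]; exact U.zero_mem
  | add y z _ _ hy hz => rw [add_mul]; exact U.add_mem hy hz
  | smul r y _ hy => rw [smul_mul_assoc]; exact U.smul_mem r hy

theorem mul_left_mem_of_mem_mulSpan [SMulCommClass F A A] {S T U : Submodule F A} {x a : A}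
    (hx : x ∈ mulSpan F S T) (h : ∀ s ∈ S, ∀ t ∈ T, a * (s * t) ∈ U) : a * x ∈ U := by
  induction hx using Submodule.span_induction with
  | mem y hy => obtain ⟨s, hs, t, ht, rfl⟩ := hy; exact h s hs t ht
  | zero => rw [mul_zero]; exact U.zero_mem
  | add y z _ _ hy hz => rw [mul_add]; exact U.add_mem hy hz
  | smul r y _ hy => rw [mul_smul_comm]; exact U.smul_mem r hy

variable [SMulCommClass F A A] [IsScalarTower F A A]

/-- The preimage in `A` of the centralizer of `S/K` in `A/K`. -/
def centralizerMod (K S : Submodule F A) : Submodule F A where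
  carrier := {a | ∀ s ∈ S, a * s ∈ K ∧ s * a ∈ K}
  zero_mem' := by intro s _; simp [K.zero_mem]
  add_mem' := by
    intro a b ha hb s hs
    exact ⟨by rw [add_mul]; exact K.add_mem (ha s hs).1 (hb s hs).1,
           by rw [mul_add]; exact K.add_mem (ha s hs).2 (hb s hs).2⟩
  smul_mem' := by
    intro r a ha s hs
    exact ⟨by rw [smul_mul_assoc]; exact K.smul_mem r (ha s hs).1,
           by rw [mul_smul_comm]; exact K.smul_mem r (ha s hs).2⟩

theorem le_centralizerMod {K S : Submodule F A} (hK : IsIdeal F K) : K ≤ centralizerMod K S :=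
  fun a ha s _ => ⟨(hK s a ha).2, (hK s a ha).1⟩

section Leibniz

variable (leib : ∀ a b c : A, a * (b * c) = a * b * c + b * (a * c))
include leib

theorem isIdeal_mulSpan_sup {I J : Submodule F A} (hI : IsIdeal F I) (hJ : IsIdeal F J) :
    IsIdeal F (mulSpan F I J ⊔ mulSpan F J I) := by
  have half : ∀ P Q : Submodule F A, IsIdeal F P → IsIdeal F Q → ∀ a, ∀ w ∈ mulSpan F P Q,
      a * w ∈ mulSpan F P Q ∧ w * a ∈ mulSpan F P Q ⊔ mulSpan F Q P := by
    intro P Q hP hQ a w hw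
    constructor
    · refine mul_left_mem_of_mem_mulSpan hw fun s hs t ht => ?_
      rw [leib a s t]
      exact add_mem (mul_mem_mulSpan (hP a s hs).1 ht) (mul_mem_mulSpan hs (hQ a t ht).1)
    · refine mul_right_mem_of_mem_mulSpan hw fun s hs t ht => ?_
      rw [show s * t * a = s * (t * a) - t * (s * a) by rw [leib s t a]; abel]
      exact sub_mem (Submodule.mem_sup_left (mul_mem_mulSpan hs (hQ a t ht).2))
        (Submodule.mem_sup_right (mul_mem_mulSpan ht (hP a s hs).2))
  intro a x hx
  obtain ⟨y, hy, z, hz, rfl⟩ := Submodule.mem_sup.1 hx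
  rw [mul_add, add_mul]
  refine ⟨Submodule.add_mem_sup (half I J hI hJ a y hy).1 (half J I hJ hI a z hz).1,
    add_mem (half I J hI hJ a y hy).2 ?_⟩
  rw [sup_comm]
  exact (half J I hJ hI a z hz).2

theorem isIdeal_mulSpan_self {I : Submodule F A} (hI : IsIdeal F I) :
    IsIdeal F (mulSpan F I I) := by
  simpa only [sup_idem] using isIdeal_mulSpan_sup leib hI hI

omit [SMulCommClass F A A] in
theorem mulSpan_lcs_lcs_le (S : Submodule F A) :
    ∀ j k, mulSpan F (lcs F S j) (lcs F S k) ≤ lcs F S (j + k + 1)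
  | 0, k => by rw [Nat.zero_add]; rfl
  | j + 1, k => by
    refine mulSpan_le fun x hx t ht => mul_right_mem_of_mem_mulSpan hx fun s hs u hu => ?_
    rw [show s * u * t = s * (u * t) - u * (s * t) by rw [leib s u t]; abel]
    refine sub_mem ?_ ?_
    · have h : s * (u * t) ∈ lcs F S (j + k + 1 + 1) :=
        mul_mem_mulSpan hs (mulSpan_lcs_lcs_le S j k (mul_mem_mulSpan hu ht))
      rwa [show j + k + 1 + 1 = j + 1 + k + 1 by omega] at h
    · have h := mulSpan_lcs_lcs_le S j (k + 1) (mul_mem_mulSpan hu (mul_mem_mulSpan hs ht))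
      rwa [show j + (k + 1) + 1 = j + 1 + k + 1 by omega] at h

theorem isIdeal_centralizerMod {K S : Submodule F A} (hK : IsIdeal F K) (hS : IsIdeal F S) :
    IsIdeal F (centralizerMod K S) := by
  intro a c hc
  refine ⟨fun b hb => ⟨?_, ?_⟩, fun b hb => ⟨?_, ?_⟩⟩
  · rw [show a * c * b = a * (c * b) - c * (a * b) by rw [leib a c b]; abel]
    exact sub_mem (hK a _ (hc b hb).1).1 (hc (a * b) (hS a b hb).1).1
  · rw [leib b a c]
    exact add_mem (hc (b * a) (hS a b hb).2).2 (hK a _ (hc b hb).2).1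
  · rw [show c * a * b = c * (a * b) - a * (c * b) by rw [leib c a b]; abel]
    exact sub_mem (hc (a * b) (hS a b hb).1).1 (hK a _ (hc b hb).1).1
  · rw [leib b c a]
    exact add_mem (hK a _ (hc b hb).2).2 (hc (b * a) (hS a b hb).2).1

theorem mulSpan_self_le_of_minimal {K B : Submodule F A} (hBsolv : IsSolv F B)
    (hK : IsIdeal F K) (hB : IsIdeal F B) (hKB : K < B)
    (hBmin : ∀ B' : Submodule F A, IsIdeal F B' → K < B' → ¬ B' < B) :
    mulSpan F B B ≤ K := by
  by_contra hBB
  have hB2 : mulSpan F B B ⊔ K = B := sup_eq_of_minimal hK hBmin hKB.le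
    (isIdeal_mulSpan_self leib hB) (mulSpan_le_of_isIdeal_left hB) hBB
  have hBder (m : ℕ) : B ≤ derSeries F B m ⊔ K := by
    induction m with
    | zero => exact le_sup_left
    | succ m ih => calc
        B = mulSpan F B B ⊔ K := hB2.symm
        _ ≤ mulSpan F (derSeries F B m ⊔ K) (derSeries F B m ⊔ K) ⊔ K :=
          sup_le_sup_right (mulSpan_mono ih ih) K
        _ ≤ derSeries F B (m + 1) ⊔ K := sup_le (mulSpan_sup_le hK) le_sup_right
  obtain ⟨m, hm⟩ := hBsolv
  exact hKB.not_ge (by simpa only [hm, bot_sup_eq] using hBder m)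

theorem le_centralizerMod_of_lcs_le {K B J : Submodule F A} (hK : IsIdeal F K)
    (hB : IsIdeal F B) (hKB : K < B)
    (hBmin : ∀ B' : Submodule F A, IsIdeal F B' → K < B' → ¬ B' < B)
    (hJ : IsIdeal F J) (hBJ : B ≤ J) {n : ℕ} (hJn : lcs F J n ≤ K) :
    J ≤ centralizerMod K B := by
  by_cases hV : mulSpan F J B ⊔ mulSpan F B J ≤ K
  · exact fun x hx b hb => ⟨hV (Submodule.mem_sup_left (mul_mem_mulSpan hx hb)),
      hV (Submodule.mem_sup_right (mul_mem_mulSpan hb hx))⟩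
  have hVB : (mulSpan F J B ⊔ mulSpan F B J) ⊔ K = B := sup_eq_of_minimal hK hBmin hKB.le
    (isIdeal_mulSpan_sup leib hJ hB)
    (sup_le (mulSpan_le_of_isIdeal_right hB) (mulSpan_le_of_isIdeal_left hB)) hV
  have hBlcs (k : ℕ) : B ≤ lcs F J k ⊔ K := by
    induction k with
    | zero => exact hBJ.trans le_sup_left
    | succ k ih =>
      have hJB : mulSpan F J B ≤ lcs F J (k + 1) ⊔ K :=
        (mulSpan_mono le_sup_left ih).trans (mulSpan_sup_le hK)
      have hBJ' : mulSpan F B J ≤ lcs F J (k + 1) ⊔ K :=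
        (mulSpan_mono ih le_sup_left).trans
          ((mulSpan_sup_le hK).trans (sup_le_sup_right (mulSpan_lcs_lcs_le leib J k 0) K))
      rw [← hVB]
      exact sup_le (sup_le hJB hBJ') le_sup_right
  exact (hKB.not_ge ((hBlcs n).trans (sup_le hJn le_rfl))).elim

theorem centralizerMod_eq_of_frattini_eq_bot {K B : Submodule F A}
    (hK : IsIdeal F K) (hB : IsIdeal F B) (hKB : K < B) (hBB : mulSpan F B B ≤ K)
    (hBle : ∀ J : Submodule F A, IsIdeal F J → K < J → B ≤ J)
    (hΦ : ∀ J : Submodule F A, IsIdeal F J → K ≤ J →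
      (∀ M : Submodule F A, IsMaxSubalg F M → K ≤ M → J ≤ M) → J = K) :
    centralizerMod K B = B := by
  set C := centralizerMod K B
  have hBC : B ≤ C := fun b hb b' hb' =>
    ⟨hBB (mul_mem_mulSpan hb hb'), hBB (mul_mem_mulSpan hb' hb)⟩
  obtain ⟨M, hM, hKM, hBM⟩ : ∃ M, IsMaxSubalg F M ∧ K ≤ M ∧ ¬ B ≤ M := by
    by_contra! h
    exact hKB.ne' (hΦ B hB hKB.le h)
  have hMB := hM.sup_eq_top hB hBM
  -- `B` acts on `C` into `K ⊆ M`, and `A = M + B`.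
  have hCM : IsIdeal F (C ⊓ M) := by
    intro a d hd
    obtain ⟨m, hm, b, hb, rfl⟩ := Submodule.mem_sup.1 (hMB ▸ Submodule.mem_top : a ∈ M ⊔ B)
    have hKCM : K ≤ C ⊓ M := le_inf (le_centralizerMod hK) hKM
    have hCd := isIdeal_centralizerMod leib hK hB m d hd.1
    rw [add_mul, mul_add]
    exact ⟨add_mem ⟨hCd.1, hM.1 m hm d hd.2⟩ (hKCM (hd.1 b hb).2),
      add_mem ⟨hCd.2, hM.1 d hd.2 m hm⟩ (hKCM (hd.1 b hb).1)⟩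
  have hCMK : C ⊓ M = K := by
    refine (le_antisymm (le_inf (le_centralizerMod hK) hKM) ?_).symm
    by_contra hK'
    exact hBM ((hBle _ hCM (lt_of_le_not_ge (le_inf (le_centralizerMod hK) hKM) hK')).trans
      inf_le_right)
  calc C = (B ⊔ M) ⊓ C := by rw [sup_comm, hMB, top_inf_eq]
    _ = B ⊔ M ⊓ C := sup_inf_assoc_of_le M hBC
    _ = B := by rw [inf_comm, hCMK, sup_eq_left.2 hKB.le]

end Leibniz

end Leib

open Leib in
theorem primitive_genFrattini_iff_minimal_eq_nil_general
    {F : Type*} [Field F] {A : Type*} [NonUnitalNonAssocRing A]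
    [Module F A] [SMulCommClass F A A] [IsScalarTower F A A] [Module.Finite F A]
    (leib : ∀ a b c : A, a * (b * c) = a * b * c + b * (a * c))
    (hAsolv : IsSolv F (⊤ : Submodule F A))
    (N : Submodule F A) (hN : IsIdeal F N) (hNnilp : IsNilp F N)
    (hNmax : ∀ M : Submodule F A, IsIdeal F M → IsNilp F M → M ≤ N)
    (K : Submodule F A) (hK : IsPrimitiveIdeal F K)
    (B : Submodule F A) (hB : IsIdeal F B) (hKB : K < B)
    (hBmin : ∀ B' : Submodule F A, IsIdeal F B' → K < B' → ¬ B' < B)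
    (hBuniq : ∀ B'' : Submodule F A, IsIdeal F B'' → K < B'' →
      (∀ B' : Submodule F A, IsIdeal F B' → K < B' → ¬ B' < B'') → B'' = B) :
    GenFrattiniN F K ↔ B = N := by
  obtain ⟨hKid, hΦ, -, -⟩ := hK
  have hBle : ∀ J, IsIdeal F J → K < J → B ≤ J := fun _ => le_of_unique_minimal hBuniq
  have hBB := mulSpan_self_le_of_minimal leib (hAsolv.of_le le_top) hKid hB hKB hBmin
  have hCB := centralizerMod_eq_of_frattini_eq_bot leib hKid hB hKB hBB hBle hΦ
  have hJB : ∀ J, IsIdeal F J → K ≤ J → ∀ n, lcs F J n ≤ K → J ≤ B := by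
    intro J hJ hKJ n hJn
    rcases hKJ.eq_or_lt with rfl | hKJ
    · exact hKB.le
    · exact hCB ▸ le_centralizerMod_of_lcs_le leib hKid hB hKB hBmin hJ (hBle J hJ hKJ) hJn
  constructor
  · intro hKgen
    have hBN : B ≤ N := hNmax B hB (hKgen.2 B hB hKB.le ⟨1, hBB⟩)
    obtain ⟨n, hn⟩ := hNnilp
    exact le_antisymm hBN (hJB N hN (hKB.le.trans hBN) n (hn ▸ bot_le))
  · rintro rfl
    exact ⟨(hKB.trans_le le_top).ne, fun J hJ hKJ ⟨n, hJn⟩ => hNnilp.of_le (hJB J hJ hKJ n hJn)⟩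

open Leib in
/-- for a solvable `A`, a primitive ideal `K`, and `B/K` the unique
minimal ideal of `A/K`, `K` is generalized Frattini iff `B = Nil(A)`. -/
theorem primitive_genFrattini_iff_minimal_eq_nil
    {F : Type*} [Field F] [Infinite F] {A : Type*} [NonUnitalNonAssocRing A]
    [Module F A] [SMulCommClass F A A] [IsScalarTower F A A] [Module.Finite F A]
    (leib : ∀ a b c : A, a * (b * c) = a * b * c + b * (a * c))
    (hAsolv : IsSolv F (⊤ : Submodule F A))
    (N : Submodule F A) (hN : IsIdeal F N) (hNnilp : IsNilp F N)
    (hNmax : ∀ M : Submodule F A, IsIdeal F M → IsNilp F M → M ≤ N)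
    (K : Submodule F A) (hK : IsPrimitiveIdeal F K)
    (B : Submodule F A) (hB : IsIdeal F B) (hKB : K < B)
    (hBmin : ∀ B' : Submodule F A, IsIdeal F B' → K < B' → ¬ B' < B)
    (hBuniq : ∀ B'' : Submodule F A, IsIdeal F B'' → K < B'' →
      (∀ B' : Submodule F A, IsIdeal F B' → K < B' → ¬ B' < B'') → B'' = B) :
    GenFrattiniN F K ↔ B = N :=
  primitive_genFrattini_iff_minimal_eq_nil_general leib hAsolv N hN hNnilp hNmax K hK B hB hKB hBmin
    hBuniq
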